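/- Let μ be a probability distribution on a finite set T, let x be a point, and sort the elements of T by increasing distance from x into groups A_1, ..., A_k of equal distance with masses μ_i = μ(A_i), and partial sums Q_i = μ_0 + μ_1 + ... + μ_i where μ_0 = μ({x}). Then Z_x := ∑_{i=1}^{k} μ_i/Q_i ≤ 1 + ln(1/Q_1), where Q_1 = μ_0 + μ_1. In particular Z_x ≤ 1 + ln(1/μ(x*)) where x* is a closest element of T to x with μ(x*) > 0. -/

import Mathlib

/-!
For `i ≥ 2` the term `μ i / Q i = 1 - Q (i - 1) / Q i` is at most `log Q i - log Q (i - 1)`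
(from `1 - x⁻¹ ≤ log x`), so these terms telescope to `log Q k - log Q 1 = log (1 / Q 1)`,
while the first term `μ 1 / Q 1` is at most `1`.
-/

open Finset Real

lemma sub_div_le_log_sub_log {a b : ℝ} (ha : 0 < a) (hb : 0 < b) :
    (b - a) / b ≤ log b - log a :=
  calc (b - a) / b = 1 - (b / a)⁻¹ := by field_simp
    _ ≤ log (b / a) := one_sub_inv_le_log_of_pos (div_pos hb ha)
    _ = log b - log a := log_div hb.ne' ha.ne'

lemma sum_Ico_sub_div_le_log_sub_log {Q : ℕ → ℝ} {m n : ℕ} (hmn : m ≤ n)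
    (hQ : ∀ i ∈ Icc m n, 0 < Q i) :
    ∑ i ∈ Ico m n, (Q (i + 1) - Q i) / Q (i + 1) ≤ log (Q n) - log (Q m) :=
  calc ∑ i ∈ Ico m n, (Q (i + 1) - Q i) / Q (i + 1)
      ≤ ∑ i ∈ Ico m n, (log (Q (i + 1)) - log (Q i)) := by
        refine sum_le_sum fun i hi => sub_div_le_log_sub_log (hQ i ?_) (hQ (i + 1) ?_) <;> grind
    _ = log (Q n) - log (Q m) := sum_Ico_sub (fun i => log (Q i)) hmn

/-- With masses `μ 0, μ 1, ..., μ k ≥ 0`, partial sums `Q i = μ 0 + ⋯ + μ i`,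
`Q 1 > 0` and total mass `Q k = 1`, the normalization constant
`Z = ∑_{i=1}^k μ i / Q i` satisfies `Z ≤ 1 + ln (1 / Q 1)`. -/
theorem stmt_1 (k : ℕ) (hk : 1 ≤ k) (μ : ℕ → ℝ) (hμ : ∀ i, 0 ≤ μ i)
    (Q : ℕ → ℝ) (hQ : ∀ i, Q i = ∑ j ∈ Finset.range (i + 1), μ j)
    (hQ1 : 0 < Q 1) (hQk : Q k = 1) :
    ∑ i ∈ Finset.Icc 1 k, μ i / Q i ≤ 1 + Real.log (1 / Q 1) := by
  have hQ_succ (i : ℕ) : Q (i + 1) = Q i + μ (i + 1) := by rw [hQ, hQ, sum_range_succ]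
  have hQ_mono : Monotone Q := monotone_nat_of_le_succ fun i => by linarith [hQ_succ i, hμ (i + 1)]
  have hμ1 : μ 1 / Q 1 ≤ 1 := by
    rw [div_le_one hQ1, hQ_succ 0, hQ 0, sum_range_one]
    linarith [hμ 0]
  have htail : ∑ i ∈ Ico 1 k, μ (i + 1) / Q (i + 1) ≤ log (Q k) - log (Q 1) := by
    simpa only [hQ_succ, add_sub_cancel_left] using
      sum_Ico_sub_div_le_log_sub_log hk fun i hi => hQ1.trans_le (hQ_mono (mem_Icc.1 hi).1)
  have hsplit :
      ∑ i ∈ Icc 1 k, μ i / Q i = μ 1 / Q 1 + ∑ i ∈ Ico 1 k, μ (i + 1) / Q (i + 1) := by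
    rw [← Ico_add_one_right_eq_Icc, sum_eq_sum_Ico_succ_bot (by omega),
      sum_Ico_add' (fun i => μ i / Q i)]
  rw [hQk, log_one] at htail
  rw [hsplit, one_div, log_inv]
  linarith
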